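/- Let g(x,y) = -f(x,y) + f(x+1,y) where f(x,y) = sqrt((x+y-2)/(xy)). For real numbers x, y ≥ 2, the function g is monotonically decreasing in y; that is, if x ≥ 2 and 2 ≤ y1 ≤ y2, then g(x,y2) ≤ g(x,y1). -/

import Mathlib

/-!
Since `f x y ^ 2 = 1/x + (1 - 2/x)/y`, for fixed `x` the drop `f x y₁ - f x y₂` equals
`(x - 2)(y₂ - y₁) / (x y₁ y₂ (f x y₁ + f x y₂))`. Comparing these drops at `x` and `x + 1`
reduces to the pointwise inequality `(x - 2)(x + 1) f (x + 1) y ≤ x (x - 1) f x y`,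
which after squaring is a polynomial inequality with nonnegative coefficients in `x - 2` and `y`.
-/

noncomputable def sqrtRatio (x y : ℝ) : ℝ := √((x + y - 2) / (x * y))

lemma sqrtRatio_pos {x y : ℝ} (hx : 0 < x) (hy : 0 < y) (hxy : 2 < x + y) :
    0 < sqrtRatio x y :=
  Real.sqrt_pos.2 (div_pos (by linarith) (by positivity))

lemma sqrtRatio_sq {x y : ℝ} (hx : 0 < x) (hy : 0 < y) (hxy : 2 ≤ x + y) :
    sqrtRatio x y ^ 2 = (x + y - 2) / (x * y) :=
  Real.sq_sqrt (div_nonneg (by linarith) (by positivity))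

lemma sqrtRatio_sq_sub_sq {x y₁ y₂ : ℝ} (hx : 2 ≤ x) (hy₁ : 0 < y₁) (hy₂ : 0 < y₂) :
    sqrtRatio x y₁ ^ 2 - sqrtRatio x y₂ ^ 2 = (x - 2) * (y₂ - y₁) / (x * y₁ * y₂) := by
  rw [sqrtRatio_sq (by linarith) hy₁ (by linarith), sqrtRatio_sq (by linarith) hy₂ (by linarith)]
  field_simp
  ring

lemma mul_sqrtRatio_add_one_le {x y : ℝ} (hx : 2 ≤ x) (hy : 0 < y) :
    (x - 2) * (x + 1) * sqrtRatio (x + 1) y ≤ x * (x - 1) * sqrtRatio x y := by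
  have hx₀ : 0 < x := by linarith
  have hsq : ∀ {c : ℝ} (r : ℝ), 0 ≤ c → c * √r = √(c ^ 2 * r) := fun r hc => by
    rw [Real.sqrt_mul (sq_nonneg _), Real.sqrt_sq hc]
  unfold sqrtRatio
  rw [hsq _ (by nlinarith), hsq _ (by nlinarith)]
  apply Real.sqrt_le_sqrt
  rw [mul_div_assoc', mul_div_assoc', div_le_div_iff₀ (by positivity) (by positivity)]
  have hP : 0 ≤ 2 * (x - 2) + 2 * (x - 2) ^ 2 + 2 * y + 5 * (x - 2) * y + (x - 2) ^ 2 * y := by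
    have : 0 ≤ x - 2 := by linarith
    positivity
  have hfactor : 0 ≤ x * (x + 1) * y := by positivity
  linear_combination mul_nonneg hfactor hP

lemma sub_le_sub_of_sq_sub_sq_mul_le {a b c d : ℝ} (hab : 0 < a + b) (hcd : 0 < c + d)
    (h : (c ^ 2 - d ^ 2) * (a + b) ≤ (a ^ 2 - b ^ 2) * (c + d)) : c - d ≤ a - b := by
  rw [sq_sub_sq, sq_sub_sq] at h
  exact le_of_mul_le_mul_left (by linarith) (mul_pos hab hcd)

lemma sqrtRatio_sub_le_sqrtRatio_add_one_sub {x y₁ y₂ : ℝ} (hx : 2 ≤ x) (hy₁ : 0 < y₁)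
    (hy₁₂ : y₁ ≤ y₂) :
    sqrtRatio x y₁ - sqrtRatio x y₂ ≤ sqrtRatio (x + 1) y₁ - sqrtRatio (x + 1) y₂ := by
  have hy₂ : 0 < y₂ := by linarith
  have hpos : ∀ {x' y}, 2 ≤ x' → 0 < y → 0 < sqrtRatio x' y := fun hx' hy =>
    sqrtRatio_pos (by linarith) hy (by linarith)
  apply sub_le_sub_of_sq_sub_sq_mul_le (add_pos (hpos (by linarith) hy₁) (hpos (by linarith) hy₂))
    (add_pos (hpos hx hy₁) (hpos hx hy₂))
  rw [sqrtRatio_sq_sub_sq hx hy₁ hy₂, sqrtRatio_sq_sub_sq (by linarith) hy₁ hy₂]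
  have hscale : 0 ≤ (y₂ - y₁) / (x * (x + 1) * y₁ * y₂) :=
    div_nonneg (by linarith) (by positivity)
  calc (x - 2) * (y₂ - y₁) / (x * y₁ * y₂) * (sqrtRatio (x + 1) y₁ + sqrtRatio (x + 1) y₂)
      = (y₂ - y₁) / (x * (x + 1) * y₁ * y₂) *
          ((x - 2) * (x + 1) * sqrtRatio (x + 1) y₁ + (x - 2) * (x + 1) * sqrtRatio (x + 1) y₂) := by
        field_simp
    _ ≤ (y₂ - y₁) / (x * (x + 1) * y₁ * y₂) *
          (x * (x - 1) * sqrtRatio x y₁ + x * (x - 1) * sqrtRatio x y₂) := by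
        gcongr ?_ * (?_ + ?_) <;> exact mul_sqrtRatio_add_one_le hx ‹_›
    _ = (x + 1 - 2) * (y₂ - y₁) / ((x + 1) * y₁ * y₂) * (sqrtRatio x y₁ + sqrtRatio x y₂) := by
        field_simp
        ring

theorem stmt2 (f : ℝ → ℝ → ℝ) (hf : ∀ x y, f x y = Real.sqrt ((x + y - 2) / (x * y)))
    (g : ℝ → ℝ → ℝ) (hg : ∀ x y, g x y = -f x y + f (x + 1) y)
    (x y1 y2 : ℝ) (hx : 2 ≤ x) (hy1 : 2 ≤ y1) (hy12 : y1 ≤ y2) :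
    g x y2 ≤ g x y1 := by
  have hf' : f = sqrtRatio := funext₂ hf
  rw [hg, hg, hf']
  linarith [sqrtRatio_sub_le_sqrtRatio_add_one_sub hx (by linarith : (0 : ℝ) < y1) hy12]
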